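/- Let P be a program, U a g-splitting set for P, X ⊆ U a set satisfying every rule of P_U, and M' a set of atoms disjoint from U that satisfies every rule of Reduce(P, X, U−X). Then M' ∪ X satisfies every rule of P. -/
import Mathlib


structure Rule where
  head : Set ℕ
  pos : Set ℕ
  neg : Set ℕ

def Rule.atoms (r : Rule) : Set ℕ := r.head ∪ r.pos ∪ r.neg

def Atoms (P : Set Rule) : Set ℕ := ⋃ r ∈ P, r.atoms

def Satisfies (S : Set ℕ) (r : Rule) : Prop :=
  ¬ (r.pos ⊆ S ∧ r.neg ∩ S = ∅) ∨ (r.head ∩ S).Nonempty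

def GSplittingSet (P : Set Rule) (U : Set ℕ) : Prop :=
  ∀ r ∈ P, (r.head ∩ U).Nonempty → r.pos ∪ r.neg ⊆ U

def bottom (P : Set Rule) (U : Set ℕ) : Set Rule :=
  { r ∈ P | r.atoms ⊆ U }

/-- The result of `Reduce(P, X, Y)`: rules surviving both deletion phases,
in their residual form. -/
def Reduce (P : Set Rule) (X Y : Set ℕ) : Set Rule :=
  { r' | ∃ r ∈ P, r.head ∩ X = ∅ ∧ r.neg ∩ X = ∅ ∧ r.pos ∩ Y = ∅ ∧
      r' = ⟨r.head \ Y, r.pos \ X, r.neg \ Y⟩ }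

theorem gsplit_model_combination (P : Set Rule) (hfin : P.Finite)
    (U : Set ℕ) (hU : GSplittingSet P U)
    (X : Set ℕ) (hXU : X ⊆ U) (hX : ∀ r ∈ bottom P U, Satisfies X r)
    (M' : Set ℕ) (hM'U : M' ∩ U = ∅)
    (hM' : ∀ r ∈ Reduce P X (U \ X), Satisfies M' r) :
    ∀ r ∈ P, Satisfies (M' ∪ X) r := by
  intro r hr
  by_cases hhX : (r.head ∩ X).Nonempty
  · exact Or.inr ⟨hhX.choose, hhX.choose_spec.1, Or.inr hhX.choose_spec.2⟩
  by_cases hnX : (r.neg ∩ X).Nonempty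
  · obtain ⟨a, haneg, haX⟩ := hnX
    left
    rintro ⟨-, hne⟩
    exact Set.eq_empty_iff_forall_notMem.mp hne a ⟨haneg, Or.inr haX⟩
  by_cases hpU : (r.pos ∩ (U \ X)).Nonempty
  · obtain ⟨a, hap, haU, haX⟩ := hpU
    left
    rintro ⟨hpos, -⟩
    rcases hpos hap with hM | hX'
    · exact Set.eq_empty_iff_forall_notMem.mp hM'U a ⟨hM, haU⟩
    · exact haX hX'
  rw [Set.not_nonempty_iff_eq_empty] at hhX hnX hpU
  have hmem : (⟨r.head \ (U \ X), r.pos \ X, r.neg \ (U \ X)⟩ : Rule) ∈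
      Reduce P X (U \ X) := ⟨r, hr, hhX, hnX, hpU, rfl⟩
  rcases hM' _ hmem with hns | ⟨a, ⟨hah, -⟩, haM⟩
  · left
    rintro ⟨hpos, hne⟩
    apply hns
    constructor
    · rintro a ⟨hap, haX⟩
      rcases hpos hap with hM | hX'
      · exact hM
      · exact absurd hX' haX
    · ext a
      simp only [Set.mem_inter_iff, Set.mem_diff, Set.mem_empty_iff_false, iff_false, not_and]
      rintro ⟨haneg, -⟩ haM
      exact Set.eq_empty_iff_forall_notMem.mp hne a ⟨haneg, Or.inl haM⟩
  · exact Or.inr ⟨a, hah, Or.inl haM⟩
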